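/- arXiv:2603.09639 — 9 statements merged into one kernel-verified Lean document; each statement's English description precedes it below -/
import Mathlib

section
/- For every real number x and every angle θ with 0 < θ < π, the dilogarithm satisfies Im Li₂(e^{x+iθ}) + Im Li₂(e^{-x+iθ}) > (π − θ)·|x|. -/
open Real

/-- The dilogarithm, defined by `Li₂(z) = ∫ t in 0..1, -log(1 - t z)/t dt`
(principal branch of the complex logarithm). -/
noncomputable def Li2 (z : ℂ) : ℂ :=
  ∫ t in (0:ℝ)..1, -Complex.log (1 - (t : ℂ) * z) / (t : ℂ)

/-!
Put `z = e^{iθ}`. Substituting `s = t r` gives `Im Li₂(r z) = -∫₀^r arg(1 - s z)/s ds`, which is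
positive for `r > 0` because `1 - s z` lies in the lower half-plane. Since
`1 - r⁻¹ z = r⁻¹ · (-z) · conj(1 - r z)`, we have `arg(1 - r z) + arg(1 - r⁻¹ z) = θ - π`, so
`x ↦ Im Li₂(eˣ z) - Im Li₂(e⁻ˣ z)` has constant derivative `π - θ` and vanishes at `0`.
Hence the sum exceeds `(π - θ)|x|` by twice the smaller of its two positive terms.
-/

open Complex ComplexConjugate MeasureTheory

noncomputable def dilogKernel (z : ℂ) : ℝ → ℂ :=
  dslope (fun s : ℝ => log (1 - s * z)) 0

section DilogKernel

variable {z : ℂ}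

lemma one_sub_ofReal_mul_mem_slitPlane (hz : z.im ≠ 0) (s : ℝ) : 1 - s * z ∈ slitPlane := by
  rcases eq_or_ne s 0 with rfl | hs
  · simp
  · exact Or.inr (by simpa using mul_ne_zero hs hz)

lemma dilogKernel_of_ne {s : ℝ} (hs : s ≠ 0) : dilogKernel z s = log (1 - s * z) / s := by
  rw [dilogKernel, dslope_of_ne _ hs, slope_def_module]
  simp [div_eq_inv_mul]

lemma im_dilogKernel_of_ne {s : ℝ} (hs : s ≠ 0) :
    (dilogKernel z s).im = arg (1 - s * z) / s := by
  rw [dilogKernel_of_ne hs, div_ofReal_im, log_im]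

lemma continuous_dilogKernel (hz : z.im ≠ 0) : Continuous (dilogKernel z) := by
  have hdiff : Differentiable ℝ fun s : ℝ => log (1 - s * z) := fun s =>
    ((((hasDerivAt_id s).ofReal_comp.mul_const z).const_sub 1).clog_real
      (one_sub_ofReal_mul_mem_slitPlane hz s)).differentiableAt
  rw [dilogKernel, ← continuousOn_univ, continuousOn_dslope Filter.univ_mem]
  exact ⟨hdiff.continuous.continuousOn, hdiff 0⟩

end DilogKernel

lemma Li2_ofReal_mul (z : ℂ) {r : ℝ} (hr : r ≠ 0) :
    Li2 (r * z) = -∫ s in (0:ℝ)..r, dilogKernel z s := by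
  have hsubst : ∀ t : ℝ, 0 < t →
      -log (1 - t * (r * z)) / t = r • -dilogKernel z (t * r) := by
    intro t ht
    have hr' : (r : ℂ) ≠ 0 := ofReal_ne_zero.2 hr
    rw [dilogKernel_of_ne (mul_ne_zero ht.ne' hr), real_smul]
    push_cast
    field_simp
  rw [Li2,
    intervalIntegral.integral_congr_ae (ae_of_all _ fun t ht => hsubst t (by simpa using ht.1)),
    intervalIntegral.integral_smul, intervalIntegral.integral_neg,
    intervalIntegral.integral_comp_mul_right (dilogKernel z) hr]
  simp [hr]

lemma im_Li2_ofReal_mul {z : ℂ} (hz : z.im ≠ 0) {r : ℝ} (hr : r ≠ 0) :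
    (Li2 (r * z)).im = -∫ s in (0:ℝ)..r, (dilogKernel z s).im := by
  rw [Li2_ofReal_mul z hr, neg_im, ← imCLM_apply,
    ← imCLM.intervalIntegral_comp_comm ((continuous_dilogKernel hz).intervalIntegrable 0 r)]
  rfl

lemma hasDerivAt_im_Li2_ofReal_mul {z : ℂ} (hz : z.im ≠ 0) {r : ℝ} (hr : r ≠ 0) :
    HasDerivAt (fun r : ℝ => (Li2 (r * z)).im) (-(arg (1 - r * z) / r)) r := by
  have hK : Continuous fun s => (dilogKernel z s).im :=
    continuous_im.comp (continuous_dilogKernel hz)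
  rw [← im_dilogKernel_of_ne hr]
  refine (hK.integral_hasStrictDerivAt 0 r).hasDerivAt.neg.congr_of_eventuallyEq ?_
  filter_upwards [isOpen_ne.mem_nhds hr] with r' hr' using im_Li2_ofReal_mul hz hr'

lemma im_Li2_ofReal_mul_pos {z : ℂ} (hz : 0 < z.im) {r : ℝ} (hr : 0 < r) :
    0 < (Li2 (r * z)).im := by
  have hK : Continuous fun s => -(dilogKernel z s).im :=
    (continuous_im.comp (continuous_dilogKernel hz.ne')).neg
  rw [im_Li2_ofReal_mul hz.ne' hr.ne', ← intervalIntegral.integral_neg]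
  refine intervalIntegral.intervalIntegral_pos_of_pos_on (hK.intervalIntegrable 0 r)
    (fun s hs => ?_) hr
  have hw : (1 - s * z).im < 0 := by simpa using mul_pos hs.1 hz
  rw [im_dilogKernel_of_ne hs.1.ne', neg_pos]
  exact div_neg_of_neg_of_pos (arg_neg_iff.2 hw) hs.1

lemma arg_one_sub_mul_add_arg_one_sub_inv_mul {z : ℂ} (hz1 : ‖z‖ = 1) (hz : 0 < z.im)
    {r : ℝ} (hr : 0 < r) : arg (1 - r * z) + arg (1 - r⁻¹ * z) = arg z - π := by
  set w := 1 - r * z with hw_def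
  have hw : w.im < 0 := by simpa [w] using mul_pos hr hz
  have hw0 : w ≠ 0 := fun h => by simp [h] at hw
  have hz0 : z ≠ 0 := fun h => by simp [h] at hz
  have hzz : z * conj z = 1 := by rw [mul_conj, normSq_eq_norm_sq, hz1]; simp
  have hfactor : 1 - r⁻¹ * z = r⁻¹ * (-z * conj w) := by
    have hr' : (r : ℂ) ≠ 0 := ofReal_ne_zero.2 hr.ne'
    rw [hw_def, map_sub, map_one, map_mul, conj_ofReal]
    push_cast
    field_simp
    linear_combination -(r : ℂ) * hzz
  have harg_conj : arg (conj w) = -arg w := by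
    rw [arg_conj, if_neg ((arg_neg_iff.2 hw).trans pi_pos).ne]
  rw [hfactor, arg_real_mul _ (inv_pos.2 hr),
    arg_mul (neg_ne_zero.2 hz0) ((map_ne_zero _).2 hw0), arg_neg_eq_arg_sub_pi_of_im_pos hz,
    harg_conj]
  · ring
  · rw [arg_neg_eq_arg_sub_pi_of_im_pos hz, harg_conj]
    constructor <;>
      linarith [neg_pi_lt_arg w, arg_neg_iff.2 hw, arg_nonneg_iff.2 hz.le, arg_le_pi z]

lemma im_Li2_exp_mul_sub_im_Li2_exp_neg_mul {z : ℂ} (hz1 : ‖z‖ = 1) (hz : 0 < z.im) (x : ℝ) :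
    (Li2 (Real.exp x * z)).im - (Li2 (Real.exp (-x) * z)).im = (π - arg z) * x := by
  let F : ℝ → ℝ := fun y =>
    (Li2 (Real.exp y * z)).im - (Li2 (Real.exp (-y) * z)).im - (π - arg z) * y
  have hF : ∀ y, HasDerivAt F 0 y := by
    intro y
    have h₁ := (hasDerivAt_im_Li2_ofReal_mul hz.ne' (Real.exp_pos y).ne').comp y
      (Real.hasDerivAt_exp y)
    have h₂ := (hasDerivAt_im_Li2_ofReal_mul hz.ne' (Real.exp_pos (-y)).ne').comp y
      ((Real.hasDerivAt_exp (-y)).comp y (hasDerivAt_neg y))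
    have h₃ := (hasDerivAt_id y).const_mul (π - arg z)
    refine ((h₁.sub h₂).sub h₃).congr_deriv ?_
    have hsum := arg_one_sub_mul_add_arg_one_sub_inv_mul hz1 hz (Real.exp_pos y)
    rw [← Real.exp_neg] at hsum
    rw [neg_mul, div_mul_cancel₀ _ (Real.exp_pos y).ne', mul_neg_one, neg_mul_neg,
      div_mul_cancel₀ _ (Real.exp_pos (-y)).ne']
    linarith
  have hconst := is_const_of_deriv_eq_zero (fun y => (hF y).differentiableAt)
    (fun y => (hF y).deriv) x 0
  simpa [F, sub_eq_zero] using hconst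

/-- For every real `x` and every `θ ∈ (0,π)`,
`Im Li₂(e^{x+iθ}) + Im Li₂(e^{-x+iθ}) > (π − θ)·|x|`. -/
theorem im_li2_add_im_li2_gt (x θ : ℝ) (hθ0 : 0 < θ) (hθπ : θ < π) :
    (π - θ) * |x| <
      (Li2 (Complex.exp ((x : ℂ) + (θ : ℂ) * Complex.I))).im +
      (Li2 (Complex.exp (-(x : ℂ) + (θ : ℂ) * Complex.I))).im := by
  set z := exp (θ * I)
  have hz1 : ‖z‖ = 1 := norm_exp_ofReal_mul_I θ
  have hz : 0 < z.im := by
    rw [exp_ofReal_mul_I_im]; exact sin_pos_of_pos_of_lt_pi hθ0 hθπ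
  have harg : arg z = θ := by
    rw [arg_exp_mul_I, toIocMod_eq_self]; constructor <;> linarith
  have hsplit : ∀ y : ℝ, exp (y + θ * I) = Real.exp y * z := by
    intro y; rw [Complex.exp_add, ofReal_exp]
  rw [hsplit, ← ofReal_neg, hsplit]
  have hdiff := im_Li2_exp_mul_sub_im_Li2_exp_neg_mul hz1 hz x
  have hpos₁ := im_Li2_ofReal_mul_pos hz (Real.exp_pos x)
  have hpos₂ := im_Li2_ofReal_mul_pos hz (Real.exp_pos (-x))
  rw [harg] at hdiff
  rcases abs_cases x with ⟨habs, _⟩ | ⟨habs, _⟩ <;> rw [habs] <;> linarith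
end

section
/- For every s with 0 < s < 1 and every θ with 0 < θ < π, the series ∑_{n=1}^∞ sⁿ·sin(nθ)/n² is strictly positive. -/
/-!
Write the series as `∑ cₙ s^(n+1)/(n+1)` with `cₙ = sin((n+1)θ)/(n+1)`, i.e. as
`∫₀ˢ ∑ cₙ tⁿ dt`. For `0 < t < 1` the integrand is
`t⁻¹ Im(-log(1 - t e^{iθ})) = -t⁻¹ arg(1 - t e^{iθ})`, and `1 - t e^{iθ}` lies in the open
lower half-plane because `sin θ > 0`; so the integrand is positive on `(0, s)`.
-/

open Real Set Interval MeasureTheory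

section PowerSeries

variable {c : ℕ → ℝ} {s : ℝ}

lemma norm_mul_pow_le_of_abs_le {t : ℝ} (ht : |t| ≤ s) (n : ℕ) :
    ‖c n * t ^ n‖ ≤ ‖c n‖ * s ^ n := by
  rw [norm_mul, norm_pow, Real.norm_eq_abs t]
  exact mul_le_mul_of_nonneg_left (pow_le_pow_left₀ (abs_nonneg t) ht n) (norm_nonneg _)

lemma summable_norm_mul_pow_of_norm_le {C : ℝ} (hC : ∀ n, ‖c n‖ ≤ C) (hs0 : 0 ≤ s)
    (hs1 : s < 1) : Summable fun n => ‖c n‖ * s ^ n :=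
  ((summable_geometric_of_lt_one hs0 hs1).mul_left C).of_nonneg_of_le
    (fun n => by positivity) fun n => mul_le_mul_of_nonneg_right (hC n) (by positivity)

lemma intervalIntegrable_tsum_mul_pow (hs : 0 ≤ s) (hc : Summable fun n => ‖c n‖ * s ^ n) :
    IntervalIntegrable (fun t => ∑' n, c n * t ^ n) volume 0 s := by
  refine ContinuousOn.intervalIntegrable <| continuousOn_tsum
    (fun n => (continuous_const.mul (continuous_pow n)).continuousOn) hc fun n t ht => ?_
  rw [uIcc_of_le hs] at ht
  exact norm_mul_pow_le_of_abs_le (abs_le.2 ⟨by linarith [ht.1], ht.2⟩) n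

lemma hasSum_mul_pow_succ_div_integral (hs : 0 ≤ s) (hc : Summable fun n => ‖c n‖ * s ^ n) :
    HasSum (fun n => c n * s ^ (n + 1) / (n + 1)) (∫ t in (0)..s, ∑' n, c n * t ^ n) := by
  have hbound : ∀ t ∈ Ι 0 s, |t| ≤ s := fun t ht => by
    rw [uIoc_of_le hs] at ht
    exact abs_le.2 ⟨by linarith [ht.1], ht.2⟩
  have hsum := intervalIntegral.hasSum_integral_of_dominated_convergence
    (μ := volume) (F := fun n t => c n * t ^ n) (fun n _ => ‖c n‖ * s ^ n)
    (fun n => (continuous_const.mul (continuous_pow n)).aestronglyMeasurable)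
    (fun n => .of_forall fun t ht => norm_mul_pow_le_of_abs_le (hbound t ht) n)
    (.of_forall fun _ _ => hc) intervalIntegrable_const
    (.of_forall fun t ht => (hc.of_norm_bounded
      (norm_mul_pow_le_of_abs_le (hbound t ht))).hasSum)
  refine hsum.congr_fun fun n => ?_
  rw [intervalIntegral.integral_const_mul, integral_pow]
  simp [mul_div_assoc]

end PowerSeries

lemma hasSum_sin_div_mul_pow_succ (θ : ℝ) {t : ℝ} (ht : |t| < 1) :
    HasSum (fun n : ℕ => sin ((n + 1) * θ) / (n + 1) * t ^ (n + 1))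
      (-(1 - t * Complex.exp (θ * Complex.I)).arg) := by
  have hz : ‖(t * Complex.exp (θ * Complex.I) : ℂ)‖ < 1 := by
    simpa [Complex.norm_exp_ofReal_mul_I] using ht
  convert Complex.hasSum_im (Complex.hasSum_taylorSeries_neg_log' hz) using 1
  · ext n
    rw [mul_pow, ← Complex.exp_nat_mul, ← Complex.ofReal_pow]
    have harg : ((n + 1 : ℕ) : ℂ) * (θ * Complex.I)
        = ((((n : ℝ) + 1) * θ : ℝ) : ℂ) * Complex.I := by
      push_cast; ring
    rw [harg, show (n : ℂ) + 1 = (((n : ℝ) + 1 : ℝ) : ℂ) by push_cast; rfl,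
      Complex.div_ofReal_im, Complex.im_ofReal_mul, Complex.exp_ofReal_mul_I_im]
    ring
  · simp [Complex.log_im]

lemma arg_one_sub_mul_exp_neg {t θ : ℝ} (ht : 0 < t) (hθ : 0 < sin θ) :
    (1 - t * Complex.exp (θ * Complex.I)).arg < 0 := by
  rw [Complex.arg_neg_iff]
  simp only [Complex.sub_im, Complex.one_im, Complex.mul_im, Complex.ofReal_re,
    Complex.ofReal_im, zero_mul, add_zero, Complex.exp_ofReal_mul_I_im]
  linarith [mul_pos ht hθ]

lemma tsum_sin_div_mul_pow_pos {t θ : ℝ} (ht0 : 0 < t) (ht1 : t < 1) (hθ : 0 < sin θ) :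
    0 < ∑' n : ℕ, sin ((n + 1) * θ) / (n + 1) * t ^ n := by
  have hsum := hasSum_sin_div_mul_pow_succ θ (abs_lt.2 ⟨by linarith, ht1⟩)
  have h : t * ∑' n : ℕ, sin ((n + 1) * θ) / (n + 1) * t ^ n
      = -(1 - t * Complex.exp (θ * Complex.I)).arg := by
    rw [← tsum_mul_left, ← hsum.tsum_eq]
    exact tsum_congr fun n => by ring
  exact pos_of_mul_pos_right (h ▸ neg_pos.2 (arg_one_sub_mul_exp_neg ht0 hθ)) ht0.le

/-- For `0 < s < 1` and `0 < θ < π`, the series `∑_{n=1}^∞ sⁿ sin(nθ)/n²`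
is strictly positive. -/
theorem tsum_pow_sin_div_sq_pos (s θ : ℝ) (hs0 : 0 < s) (hs1 : s < 1)
    (hθ0 : 0 < θ) (hθπ : θ < π) :
    0 < ∑' n : ℕ, s ^ (n + 1) * Real.sin (((n : ℝ) + 1) * θ) / ((n : ℝ) + 1) ^ 2 := by
  have hsin : 0 < sin θ := sin_pos_of_pos_of_lt_pi hθ0 hθπ
  set c : ℕ → ℝ := fun n => sin ((n + 1) * θ) / (n + 1)
  have hc_le : ∀ n, ‖c n‖ ≤ 1 := fun n => by
    rw [norm_div, Real.norm_eq_abs, Real.norm_of_nonneg (by positivity)]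
    exact div_le_one_of_le₀
      (by linarith [abs_sin_le_one ((n + 1) * θ), n.cast_nonneg (α := ℝ)]) (by positivity)
  have hc := summable_norm_mul_pow_of_norm_le hc_le hs0.le hs1
  have hseries : (fun n : ℕ => s ^ (n + 1) * sin ((n + 1) * θ) / ((n : ℝ) + 1) ^ 2)
      = fun n => c n * s ^ (n + 1) / (n + 1) := by
    ext n; simp only [c]; field_simp
  rw [hseries, (hasSum_mul_pow_succ_div_integral hs0.le hc).tsum_eq]
  exact intervalIntegral.intervalIntegral_pos_of_pos_on
    (intervalIntegrable_tsum_mul_pow hs0.le hc)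
    (fun t ht => tsum_sin_div_mul_pow_pos ht.1 (ht.2.trans hs1) hsin) hs0
end

section
/- For every real number x and every angle θ with 0 < θ < π, one has Im Li₂(e^{x+iθ}) − Im Li₂(e^{-x+iθ}) = (π − θ)·x. -/
/-!
Write `Li₁(z) = -log(1 - z)`. Substituting `u = t r` turns `Li₂(r w)` into the integral over
`[0, r]` of the slope of `u ↦ Li₁(u w)` at `0`, so `d/dy Li₂(e^y w) = Li₁(e^y w)`.
For `|w| = 1` one has `1 - e^{-y} w = e^{-y} · (-w) · conj(1 - e^y w)`, hence
`arg(1 - e^y w) + arg(1 - e^{-y} w) = arg w - π` when `Im w > 0`. Thus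
`y ↦ Im Li₂(e^y w) - Im Li₂(e^{-y} w)` has constant derivative `π - arg w` and vanishes at `0`.
-/

open Real

open ComplexConjugate

noncomputable def Li1 (z : ℂ) : ℂ := -Complex.log (1 - z)

lemma im_Li1 (z : ℂ) : (Li1 z).im = -(1 - z).arg := by
  simp [Li1, Complex.log_im]

lemma HasDerivAt.im {f : ℝ → ℂ} {f' : ℂ} {x : ℝ} (h : HasDerivAt f f' x) :
    HasDerivAt (fun x => (f x).im) f'.im x :=
  Complex.imCLM.hasFDerivAt.comp_hasDerivAt x h

lemma one_sub_ofReal_mul_mem_slitPlane_s2 {w : ℂ} (hw : w.im ≠ 0) (u : ℝ) :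
    1 - u * w ∈ Complex.slitPlane := by
  rcases eq_or_ne u 0 with rfl | hu
  · simp
  · exact Complex.mem_slitPlane_iff.2 (Or.inr (by simp [hu, hw]))

lemma differentiable_Li1_ofReal_mul {w : ℂ} (hw : w.im ≠ 0) :
    Differentiable ℝ (fun u : ℝ => Li1 (u * w)) := fun u =>
  ((((hasDerivAt_id u).ofReal_comp.mul_const w).const_sub 1).clog_real
    (one_sub_ofReal_mul_mem_slitPlane_s2 hw u)).neg.differentiableAt

lemma continuous_dslope_Li1_ofReal_mul {w : ℂ} (hw : w.im ≠ 0) :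
    Continuous (dslope (fun u : ℝ => Li1 (u * w)) 0) :=
  continuous_iff_continuousAt.2 fun u => by
    rcases eq_or_ne u 0 with rfl | hu
    · exact continuousAt_dslope_same.2 (differentiable_Li1_ofReal_mul hw 0)
    · exact (continuousAt_dslope_of_ne hu).2 (differentiable_Li1_ofReal_mul hw u).continuousAt

lemma Li2_ofReal_mul_eq_integral_dslope (w : ℂ) (r : ℝ) :
    Li2 (r * w) = ∫ u in (0:ℝ)..r, dslope (fun u : ℝ => Li1 (u * w)) 0 u := by
  rcases eq_or_ne r 0 with rfl | hr
  · simp [Li2]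
  calc Li2 (r * w) = ∫ t in (0:ℝ)..1, r • dslope (fun u : ℝ => Li1 (u * w)) 0 (t * r) := by
        refine intervalIntegral.integral_congr_ae (.of_forall fun t ht => ?_)
        rw [Set.uIoc_of_le zero_le_one] at ht
        have ht0 : (t : ℂ) ≠ 0 := by exact_mod_cast ht.1.ne'
        have hr0 : (r : ℂ) ≠ 0 := by exact_mod_cast hr
        rw [dslope_of_ne _ (mul_ne_zero ht.1.ne' hr), slope_def_module]
        simp [Li1]
        field_simp
    _ = _ := by
        rw [intervalIntegral.integral_smul, intervalIntegral.integral_comp_mul_right _ hr,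
          smul_smul, mul_inv_cancel₀ hr, one_smul, zero_mul, one_mul]

lemma hasDerivAt_Li2_exp_mul {w : ℂ} (hw : w.im ≠ 0) (y : ℝ) :
    HasDerivAt (fun y : ℝ => Li2 (Real.exp y * w)) (Li1 (Real.exp y * w)) y := by
  have hc := continuous_dslope_Li1_ofReal_mul hw
  have hG := intervalIntegral.integral_hasDerivAt_right (hc.intervalIntegrable 0 (Real.exp y))
    hc.stronglyMeasurable.stronglyMeasurableAtFilter hc.continuousAt
  simp_rw [Li2_ofReal_mul_eq_integral_dslope]
  refine (hG.scomp y (Real.hasDerivAt_exp y)).congr_deriv ?_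
  simpa [Li1] using sub_smul_dslope (fun u : ℝ => Li1 (u * w)) 0 (Real.exp y)

lemma one_sub_inv_mul_eq {w : ℂ} (hw : ‖w‖ = 1) {a : ℝ} (ha : a ≠ 0) :
    1 - ((a⁻¹ : ℝ) : ℂ) * w = ((a⁻¹ : ℝ) : ℂ) * (-w * conj (1 - a * w)) := by
  have hwc : w * conj w = 1 := by
    rw [Complex.mul_conj, Complex.normSq_eq_norm_sq, hw]
    simp
  have ha' : (a : ℂ) ≠ 0 := by exact_mod_cast ha
  simp only [map_sub, map_one, map_mul, Complex.conj_ofReal, Complex.ofReal_inv]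
  field_simp
  linear_combination (-a : ℂ) * hwc

lemma arg_one_sub_inv_mul {w : ℂ} (hw1 : ‖w‖ = 1) (hw : 0 < w.im) {a : ℝ} (ha : 0 < a) :
    (1 - ((a⁻¹ : ℝ) : ℂ) * w).arg = w.arg - π - (1 - a * w).arg := by
  have hz : (1 - a * w).im < 0 := by simpa using mul_pos ha hw
  have hz0 : 1 - a * w ≠ 0 := fun h => by simp [h] at hz
  have hw0 : w ≠ 0 := fun h => by simp [h] at hw
  have hz_arg_neg := Complex.arg_neg_iff.2 hz
  have hz_arg_gt := Complex.neg_pi_lt_arg (1 - a * w)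
  have hw_arg_le := Complex.arg_le_pi w
  have hw_arg_nonneg := Complex.arg_nonneg_iff.2 hw.le
  have harg_neg_w := Complex.arg_neg_eq_arg_sub_pi_of_im_pos hw
  have harg_conj : (conj (1 - a * w)).arg = -(1 - a * w).arg := by
    rw [Complex.arg_conj, if_neg (by linarith)]
  rw [one_sub_inv_mul_eq hw1 ha.ne', Complex.arg_real_mul _ (inv_pos.2 ha),
    Complex.arg_mul (neg_ne_zero.2 hw0) ((map_ne_zero _).2 hz0), harg_neg_w, harg_conj]
  · ring
  · rw [harg_neg_w, harg_conj]
    constructor <;> linarith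

lemma hasDerivAt_im_Li2_exp_mul_sub {w : ℂ} (hw1 : ‖w‖ = 1) (hw : 0 < w.im) (y : ℝ) :
    HasDerivAt (fun y : ℝ => (Li2 (Real.exp y * w)).im - (Li2 (Real.exp (-y) * w)).im)
      (π - w.arg) y := by
  have h₁ := (hasDerivAt_Li2_exp_mul hw.ne' y).im
  have h₂ := ((hasDerivAt_Li2_exp_mul hw.ne' (-y)).scomp y (hasDerivAt_neg y)).im
  refine (h₁.sub h₂).congr_deriv ?_
  simp only [neg_smul, one_smul, Complex.neg_im, im_Li1]
  rw [Real.exp_neg, arg_one_sub_inv_mul hw1 hw (exp_pos y)]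
  ring

lemma im_Li2_exp_mul_sub {w : ℂ} (hw1 : ‖w‖ = 1) (hw : 0 < w.im) (x : ℝ) :
    (Li2 (Real.exp x * w)).im - (Li2 (Real.exp (-x) * w)).im = (π - w.arg) * x := by
  have h := intervalIntegral.integral_eq_sub_of_hasDerivAt
    (fun y _ => hasDerivAt_im_Li2_exp_mul_sub hw1 hw y) (intervalIntegrable_const (a := 0) (b := x))
  simp only [intervalIntegral.integral_const, smul_eq_mul, sub_zero, neg_zero, sub_self] at h
  linarith

/-- For every real `x` and every `θ ∈ (0,π)`,
`Im Li₂(e^{x+iθ}) − Im Li₂(e^{-x+iθ}) = (π − θ)·x`. -/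
theorem im_li2_sub_im_li2 (x θ : ℝ) (hθ0 : 0 < θ) (hθπ : θ < π) :
    (Li2 (Complex.exp ((x : ℂ) + (θ : ℂ) * Complex.I))).im -
      (Li2 (Complex.exp (-(x : ℂ) + (θ : ℂ) * Complex.I))).im = (π - θ) * x := by
  set w := Complex.exp (θ * Complex.I)
  have hw1 : ‖w‖ = 1 := Complex.norm_exp_ofReal_mul_I θ
  have hw : 0 < w.im := by
    simpa [w, Complex.exp_ofReal_mul_I_im] using sin_pos_of_pos_of_lt_pi hθ0 hθπ
  have hw_arg : w.arg = θ := by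
    rw [Complex.arg_exp_mul_I, toIocMod_eq_self]
    constructor <;> linarith
  have hexp (c : ℝ) : Complex.exp (c + θ * Complex.I) = Real.exp c * w := by
    rw [Complex.exp_add, Complex.ofReal_exp]
  rw [hexp, ← Complex.ofReal_neg, hexp, im_Li2_exp_mul_sub hw1 hw, hw_arg]
end

section
/- Let ε₀ ∈ (0, π/2), K ≥ 1, let Θ ∈ [ε₀, π − ε₀], and let R, S > 0 satisfy 1/K ≤ R/S ≤ K. Then: (i) tan(ε₀/2) ≤ (R² + S² − 2RS·cos Θ)/(2RS·sin Θ); (ii) (R² + S² − 2RS·cos Θ)/(2RS·sin Θ) ≤ tan((π − ε₀)/2) + 4K²/sin ε₀; and (iii) |(R/S − cos Θ)/sin Θ| ≤ (K + 1)/sin ε₀. -/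
open Real

/-- Explicit bounds on the geometric edge weight and the cotangent of the half-angle,
given the Ring-lemma bound `1/K ≤ R/S ≤ K` and `Θ ∈ [ε₀, π − ε₀]`. -/
theorem edge_weight_bounds (ε₀ K Θ R S : ℝ) (hε : ε₀ ∈ Set.Ioo 0 (π / 2)) (hK : 1 ≤ K)
    (hΘ : Θ ∈ Set.Icc ε₀ (π - ε₀)) (hR : 0 < R) (hS : 0 < S)
    (hratio : R / S ∈ Set.Icc (1 / K) K) :
    Real.tan (ε₀ / 2)
        ≤ (R ^ 2 + S ^ 2 - 2 * R * S * Real.cos Θ) / (2 * R * S * Real.sin Θ) ∧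
      (R ^ 2 + S ^ 2 - 2 * R * S * Real.cos Θ) / (2 * R * S * Real.sin Θ)
        ≤ Real.tan ((π - ε₀) / 2) + 4 * K ^ 2 / Real.sin ε₀ ∧
      |(R / S - Real.cos Θ) / Real.sin Θ| ≤ (K + 1) / Real.sin ε₀ := by
  obtain ⟨hε0, hε2⟩ := hε
  obtain ⟨hΘ1, hΘ2⟩ := hΘ
  have hπ := Real.pi_pos
  have hΘpos : 0 < Θ := lt_of_lt_of_le hε0 hΘ1
  have hΘltπ : Θ < π := lt_of_le_of_lt hΘ2 (by linarith)
  have hsinΘ : 0 < Real.sin Θ := Real.sin_pos_of_pos_of_lt_pi hΘpos hΘltπ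
  have hsinε : 0 < Real.sin ε₀ := Real.sin_pos_of_pos_of_lt_pi hε0 (by linarith)
  have hK0 : (0:ℝ) < K := lt_of_lt_of_le one_pos hK
  have hsins : Real.sin ε₀ ≤ Real.sin Θ := by
    rcases le_total Θ (π/2) with h | h
    · exact Real.strictMonoOn_sin.monotoneOn ⟨by linarith, by linarith⟩ ⟨by linarith, h⟩ hΘ1
    · rw [← Real.sin_pi_sub Θ]
      exact Real.strictMonoOn_sin.monotoneOn ⟨by linarith, by linarith⟩
        ⟨by linarith, by linarith⟩ (by linarith)
  -- half-angle formula for tan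
  have half_tan : ∀ x : ℝ, 0 < x → x < π →
      Real.tan (x/2) = (1 - Real.cos x) / Real.sin x := by
    intro x hx0 hxπ
    have hs : 0 < Real.sin (x/2) := Real.sin_pos_of_pos_of_lt_pi (by linarith) (by linarith)
    have hc : 0 < Real.cos (x/2) := Real.cos_pos_of_mem_Ioo ⟨by linarith, by linarith⟩
    have h1 : Real.sin x = 2 * Real.sin (x/2) * Real.cos (x/2) := by
      have := Real.sin_two_mul (x/2); rwa [show 2*(x/2) = x by ring] at this
    have hpyth := Real.sin_sq_add_cos_sq (x/2)
    have h2 : Real.cos x = 1 - 2 * Real.sin (x/2)^2 := by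
      have := Real.cos_two_mul (x/2); rw [show 2*(x/2) = x by ring] at this; nlinarith
    rw [Real.tan_eq_sin_div_cos, h1, h2]
    field_simp
    ring
  have hRne := hR.ne'
  have hSne := hS.ne'
  have hsΘne := hsinΘ.ne'
  have hE : (R ^ 2 + S ^ 2 - 2 * R * S * Real.cos Θ) / (2 * R * S * Real.sin Θ)
      = (1 - Real.cos Θ)/Real.sin Θ + (R - S)^2/(2*R*S*Real.sin Θ) := by
    field_simp
    ring
  have mono := Real.strictMonoOn_tan.monotoneOn
  have htan1 : Real.tan (ε₀/2) ≤ Real.tan (Θ/2) :=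
    mono ⟨by linarith, by linarith⟩ ⟨by linarith, by linarith⟩ (by linarith)
  have htan2 : Real.tan (Θ/2) ≤ Real.tan ((π - ε₀)/2) :=
    mono ⟨by linarith, by linarith⟩ ⟨by linarith, by linarith⟩ (by linarith)
  have hRK : R ≤ K * S := by
    have := hratio.2
    rw [div_le_iff₀ hS] at this
    linarith
  have hSK : S ≤ K * R := by
    have h := hratio.1
    rw [div_le_div_iff₀ hK0 hS] at h
    nlinarith
  have ha : (R - S)^2 ≤ 2*R*S*(4*K^2) := by
    nlinarith [mul_pos hR hS, mul_le_mul_of_nonneg_left hRK hR.le,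
      mul_le_mul_of_nonneg_left hSK hS.le, sq_nonneg (K-1)]
  have hd : 0 < 2*R*S*Real.sin Θ := by positivity
  have hterm : (R - S)^2/(2*R*S*Real.sin Θ) ≤ 4*K^2/Real.sin ε₀ := by
    rw [div_le_div_iff₀ hd hsinε]
    nlinarith [mul_le_mul_of_nonneg_right ha hsinε.le,
      mul_le_mul_of_nonneg_left hsins (show (0:ℝ) ≤ 2*R*S*(4*K^2) by positivity)]
  have hterm0 : 0 ≤ (R - S)^2/(2*R*S*Real.sin Θ) := by positivity
  refine ⟨?_, ?_, ?_⟩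
  · rw [hE, ← half_tan Θ hΘpos hΘltπ]
    linarith
  · rw [hE, ← half_tan Θ hΘpos hΘltπ]
    linarith
  · rw [abs_div, abs_of_pos hsinΘ]
    have ht0 : 0 < R/S := div_pos hR hS
    have hnum : |R/S - Real.cos Θ| ≤ K + 1 := by
      have hc1 := Real.neg_one_le_cos Θ
      have hc2 := Real.cos_le_one Θ
      rw [abs_le]
      constructor <;> [linarith [hratio.1, ht0]; linarith [hratio.2]]
    exact div_le_div₀ (by linarith) hnum hsinε hsins
end

section
/- Let G be a connected, locally finite simple graph on a vertex set V, and let h : V → ℝ be such that the family (h(i) − h(j))², indexed by the edges {i,j} of G, is summable. Then for every ε > 0 there exists v : V → ℝ with finite support such that the function h̃ = h + v satisfies |h̃(x) − h̃(y)| ≤ ε · d_G(x,y) for all x, y ∈ V, where d_G is the graph distance. -/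
open Real

private noncomputable def efun {V : Type*} (h : V → ℝ) : Sym2 V → ℝ :=
  Sym2.lift ⟨fun i j => (h i - h j) ^ 2, fun i j => by ring⟩

private noncomputable def gfun {V : Type*} (h : V → ℝ) : Sym2 V → ℝ :=
  Sym2.lift ⟨fun i j => |h i - h j|, fun i j => abs_sub_comm (h i) (h j)⟩

private lemma gfun_mk {V : Type*} (h : V → ℝ) (i j : V) : gfun h s(i, j) = |h i - h j| :=
  Sym2.lift_mk _ _ _

private lemma efun_mk {V : Type*} (h : V → ℝ) (i j : V) : efun h s(i, j) = (h i - h j) ^ 2 :=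
  Sym2.lift_mk _ _ _

private lemma walk_telescope {V : Type*} {G : SimpleGraph V} (h : V → ℝ) {x z : V}
    (w : G.Walk x z) :
    |h x - h z| ≤ (w.edges.map (gfun h)).sum := by
  induction w with
  | nil => simp
  | @cons a c b hac q ih =>
    rw [SimpleGraph.Walk.edges_cons, List.map_cons, List.sum_cons]
    have h1 : |h a - h b| ≤ |h a - h c| + |h c - h b| := abs_sub_le _ _ _
    rw [gfun_mk]
    linarith

private lemma exists_penultimate {V : Type*} {G : SimpleGraph V} (hconn : G.Connected)
    {a b : V} (w : G.Walk a b) (hw : w.length ≠ 0) :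
    ∃ z, G.Adj z b ∧ G.dist a z + 1 ≤ w.length := by
  induction w with
  | nil => simp at hw
  | @cons a c b hac q ih =>
    by_cases hq : q.length = 0
    · have hcb : c = b := SimpleGraph.Walk.eq_of_length_eq_zero hq
      subst hcb
      exact ⟨a, hac, by simp [SimpleGraph.dist_self]⟩
    · obtain ⟨z, hzb, hzd⟩ := ih hq
      refine ⟨z, hzb, ?_⟩
      have h1 : G.dist a z ≤ G.dist a c + G.dist c z := hconn.dist_triangle
      have h2 : G.dist a c ≤ 1 := by
        simpa using SimpleGraph.dist_le (SimpleGraph.Walk.cons hac SimpleGraph.Walk.nil)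
      have h3 : (SimpleGraph.Walk.cons hac q).length = q.length + 1 :=
        SimpleGraph.Walk.length_cons _ _
      omega

private lemma ball_finite {V : Type*} {G : SimpleGraph V} (hconn : G.Connected)
    (hlf : ∀ v : V, (G.neighborSet v).Finite) (p : V) :
    ∀ n : ℕ, {y : V | G.dist p y ≤ n}.Finite := by
  intro n
  induction n with
  | zero =>
    refine Set.Finite.subset (Set.finite_singleton p) ?_
    intro y hy
    have : G.dist p y = 0 := Nat.le_zero.mp hy
    have : p = y := (hconn.dist_eq_zero_iff).mp this
    simp [this.symm]
  | succ n ih =>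
    have hsub : {y : V | G.dist p y ≤ n + 1} ⊆
        {y : V | G.dist p y ≤ n} ∪ ⋃ z ∈ {y : V | G.dist p y ≤ n}, G.neighborSet z := by
      intro y hy
      rcases le_or_gt (G.dist p y) n with h' | h'
      · exact Or.inl h'
      · have hdy : G.dist p y = n + 1 := le_antisymm hy h'
        obtain ⟨w, hw⟩ := hconn.exists_walk_length_eq_dist p y
        have hw0 : w.length ≠ 0 := by rw [hw, hdy]; simp
        obtain ⟨z, hzy, hzd⟩ := exists_penultimate hconn w hw0
        have hzn : G.dist p z ≤ n := by omega
        exact Or.inr (Set.mem_biUnion hzn hzy)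
    exact Set.Finite.subset (ih.union (Set.Finite.biUnion ih fun z _ => hlf z)) hsub

/-- Every Dirichlet-finite function on a connected locally finite simple graph admits a
finitely supported perturbation making it `ε`-Lipschitz in the graph metric. -/
theorem exists_finite_support_perturbation_lipschitz {V : Type*} (G : SimpleGraph V)
    (hconn : G.Connected) (hlf : ∀ v : V, (G.neighborSet v).Finite) (h : V → ℝ)
    (hsum : Summable (fun e : G.edgeSet =>
      Sym2.lift ⟨fun i j => (h i - h j) ^ 2, fun i j => by ring⟩ (e : Sym2 V)))
    (ε : ℝ) (hε : 0 < ε) :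
    ∃ v : V → ℝ, (Function.support v).Finite ∧
      ∀ x y : V, |(h x + v x) - (h y + v y)| ≤ ε * (G.dist x y : ℝ) := by
  classical
  have hg_nonneg : ∀ e, 0 ≤ gfun h e := by
    intro e
    induction e using Sym2.ind with
    | _ i j => rw [gfun_mk]; exact abs_nonneg _
  have hg_sq : ∀ e, gfun h e ^ 2 = efun h e := by
    intro e
    induction e using Sym2.ind with
    | _ i j => rw [gfun_mk, efun_mk]; exact sq_abs _
  -- summability as an indicator function on all of `Sym2 V`
  have hsum' : Summable (efun h ∘ ((↑) : G.edgeSet → Sym2 V)) := hsum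
  have hF : Summable ((G.edgeSet : Set (Sym2 V)).indicator (efun h)) :=
    summable_subtype_iff_indicator.mp hsum'
  obtain ⟨s, hs⟩ := hF.vanishing (Metric.ball_mem_nhds (0 : ℝ) (show (0:ℝ) < ε ^ 2 by positivity))
  set C₀ : ℝ := ∑ e ∈ s, gfun h e with hC₀def
  have hC₀ : 0 ≤ C₀ := Finset.sum_nonneg fun e _ => hg_nonneg e
  -- Cauchy–Schwarz estimate for edge sets disjoint from `s`
  have key : ∀ t : Finset (Sym2 V), (↑t ⊆ G.edgeSet) → Disjoint t s →
      ∑ e ∈ t, gfun h e ≤ ε * Real.sqrt t.card := by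
    intro t ht hdisj
    have h1 : (∑ e ∈ t, gfun h e) ^ 2 ≤ t.card * ∑ e ∈ t, gfun h e ^ 2 :=
      sq_sum_le_card_mul_sum_sq
    have h2 : ∑ e ∈ t, gfun h e ^ 2 = ∑ e ∈ t, (G.edgeSet : Set (Sym2 V)).indicator (efun h) e := by
      refine Finset.sum_congr rfl fun e he => ?_
      rw [hg_sq, Set.indicator_of_mem (ht he)]
    have h3 : ∑ e ∈ t, (G.edgeSet : Set (Sym2 V)).indicator (efun h) e < ε ^ 2 := by
      have := hs t hdisj
      rw [Metric.mem_ball, Real.dist_0_eq_abs] at this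
      calc ∑ e ∈ t, (G.edgeSet : Set (Sym2 V)).indicator (efun h) e
          ≤ |∑ e ∈ t, (G.edgeSet : Set (Sym2 V)).indicator (efun h) e| := le_abs_self _
        _ < ε ^ 2 := this
    have h4 : (∑ e ∈ t, gfun h e) ^ 2 ≤ t.card * ε ^ 2 := by
      calc (∑ e ∈ t, gfun h e) ^ 2 ≤ t.card * ∑ e ∈ t, gfun h e ^ 2 := h1
        _ = t.card * ∑ e ∈ t, (G.edgeSet : Set (Sym2 V)).indicator (efun h) e := by rw [h2]
        _ ≤ t.card * ε ^ 2 := by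
            apply mul_le_mul_of_nonneg_left h3.le (by positivity)
    have h5 : 0 ≤ ∑ e ∈ t, gfun h e := Finset.sum_nonneg fun e _ => hg_nonneg e
    calc ∑ e ∈ t, gfun h e = Real.sqrt ((∑ e ∈ t, gfun h e) ^ 2) := (Real.sqrt_sq h5).symm
      _ ≤ Real.sqrt (t.card * ε ^ 2) := Real.sqrt_le_sqrt h4
      _ = Real.sqrt t.card * ε := by
          rw [Real.sqrt_mul (by positivity), Real.sqrt_sq hε.le]
      _ = ε * Real.sqrt t.card := mul_comm _ _
  -- endpoints of the exceptional edges
  set W : Finset V := s.biUnion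
    (fun e => Sym2.lift ⟨fun a b => ({a, b} : Finset V), fun a b => Finset.pair_comm a b⟩ e)
    with hW
  -- main pointwise estimate along geodesics
  have main : ∀ x z : V, h x - h z ≤ ε * Real.sqrt (G.dist x z) ∨
      ((∃ p ∈ W, G.dist x p ≤ G.dist x z) ∧
        h x - h z ≤ C₀ + ε * Real.sqrt (G.dist x z)) := by
    intro x z
    obtain ⟨w, hwlen⟩ := hconn.exists_walk_length_eq_dist x z
    set γ := w.bypass with hγ
    have hγlen : γ.length ≤ G.dist x z := hwlen ▸ w.length_bypass_le
    have hnodup : γ.edges.Nodup := w.bypass_isPath.1.edges_nodup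
    set t : Finset (Sym2 V) := γ.edges.toFinset with ht
    have htsub : (↑t : Set (Sym2 V)) ⊆ G.edgeSet := by
      intro e he
      exact γ.edges_subset_edgeSet (List.mem_toFinset.mp he)
    have htele : h x - h z ≤ ∑ e ∈ t, gfun h e := by
      have := walk_telescope h γ
      rw [← List.sum_toFinset (gfun h) hnodup] at this
      exact (le_abs_self _).trans this
    have hcard : (t.card : ℝ) ≤ (G.dist x z : ℝ) := by
      have : t.card = γ.edges.length := List.toFinset_card_of_nodup hnodup
      rw [this, SimpleGraph.Walk.length_edges]
      exact_mod_cast hγlen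
    have hdiffbound : ∑ e ∈ t \ s, gfun h e ≤ ε * Real.sqrt (G.dist x z) := by
      have hd : ∑ e ∈ t \ s, gfun h e ≤ ε * Real.sqrt ((t \ s).card) :=
        key _ (fun e he => htsub (Finset.mem_coe.mpr
          (Finset.sdiff_subset (Finset.mem_coe.mp he)))) Finset.sdiff_disjoint
      refine hd.trans ?_
      apply mul_le_mul_of_nonneg_left _ hε.le
      apply Real.sqrt_le_sqrt
      calc ((t \ s).card : ℝ) ≤ (t.card : ℝ) := by
            exact_mod_cast Finset.card_le_card Finset.sdiff_subset
        _ ≤ (G.dist x z : ℝ) := hcard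
    have hsplit : ∑ e ∈ t, gfun h e = ∑ e ∈ t ∩ s, gfun h e + ∑ e ∈ t \ s, gfun h e :=
      (Finset.sum_inter_add_sum_sdiff t s (gfun h)).symm
    by_cases hts : t ∩ s = ∅
    · left
      have : ∑ e ∈ t, gfun h e = ∑ e ∈ t \ s, gfun h e := by rw [hsplit, hts]; simp
      linarith [htele, hdiffbound, this ▸ htele]
    · right
      obtain ⟨e, he⟩ := Finset.nonempty_of_ne_empty hts
      have heT : e ∈ t := Finset.mem_of_mem_inter_left he
      have heS : e ∈ s := Finset.mem_of_mem_inter_right he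
      obtain ⟨a, b, rfl⟩ : ∃ a b, e = s(a, b) := Sym2.ind (fun a b => ⟨a, b, rfl⟩) e
      have haW : a ∈ W := by
        rw [hW, Finset.mem_biUnion]
        exact ⟨s(a, b), heS, by rw [Sym2.lift_mk]; exact Finset.mem_insert_self _ _⟩
      have haSup : a ∈ γ.support :=
        γ.fst_mem_support_of_mem_edges (List.mem_toFinset.mp heT)
      have hdxa : G.dist x a ≤ G.dist x z := by
        calc G.dist x a ≤ (γ.takeUntil a haSup).length := SimpleGraph.dist_le _
          _ ≤ γ.length := SimpleGraph.Walk.length_takeUntil_le γ haSup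
          _ ≤ G.dist x z := hγlen
      refine ⟨⟨a, haW, hdxa⟩, ?_⟩
      have hinter : ∑ e ∈ t ∩ s, gfun h e ≤ C₀ := by
        apply Finset.sum_le_sum_of_subset_of_nonneg (Finset.inter_subset_right)
        intro e _ _
        exact hg_nonneg e
      linarith [htele, hsplit ▸ htele]
  -- √n ≤ n for naturals
  have hsqrt_nat : ∀ n : ℕ, Real.sqrt n ≤ (n : ℝ) := by
    intro n
    rcases Nat.eq_zero_or_pos n with rfl | hn
    · simp
    · have h1 : (1 : ℝ) ≤ (n : ℝ) := by exact_mod_cast hn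
      calc Real.sqrt n ≤ Real.sqrt ((n : ℝ) ^ 2) := Real.sqrt_le_sqrt (by nlinarith)
        _ = (n : ℝ) := Real.sqrt_sq (by positivity)
  have hglobal : ∀ x z : V, h x - h z ≤ C₀ + ε * (G.dist x z : ℝ) := by
    intro x z
    have hd : ε * Real.sqrt (G.dist x z) ≤ ε * (G.dist x z : ℝ) :=
      mul_le_mul_of_nonneg_left (hsqrt_nat _) hε.le
    rcases main x z with hm | ⟨_, hm⟩ <;> linarith
  -- the infimum function
  set u : V → ℝ := fun x => ⨅ z : V, (h z + ε * (G.dist x z : ℝ)) with hu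
  have hBdd : ∀ x : V, BddBelow (Set.range fun z : V => h z + ε * (G.dist x z : ℝ)) := by
    intro x
    refine ⟨h x - C₀, ?_⟩
    rintro r ⟨z, rfl⟩
    have h1 := hglobal x z
    show h x - C₀ ≤ h z + ε * (G.dist x z : ℝ)
    linarith
  have hune : ∀ x : V, Nonempty V := fun x => ⟨x⟩
  have hu_le : ∀ x : V, u x ≤ h x := by
    intro x
    have : Nonempty V := ⟨x⟩
    have := ciInf_le (hBdd x) x
    simpa [SimpleGraph.dist_self] using this
  have hlip : ∀ x y : V, u x ≤ u y + ε * (G.dist x y : ℝ) := by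
    intro x y
    have : Nonempty V := ⟨x⟩
    rw [← sub_le_iff_le_add]
    apply le_ciInf
    intro z
    have h1 : u x ≤ h z + ε * (G.dist x z : ℝ) := ciInf_le (hBdd x) z
    have h2 : (G.dist x z : ℝ) ≤ (G.dist x y : ℝ) + (G.dist y z : ℝ) := by
      exact_mod_cast hconn.dist_triangle (u := x) (v := y) (w := z)
    nlinarith
  -- the support of the perturbation is contained in a finite union of balls
  set D₀ : ℕ := 4 + ⌈2 * C₀ / ε⌉₊ with hD₀
  have hAsub : Function.support (fun x => u x - h x) ⊆
      ⋃ p ∈ (W : Set V), {y : V | G.dist p y ≤ D₀} := by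
    intro x hx
    have hxlt : u x < h x := lt_of_le_of_ne (hu_le x) (by
      intro hcontra
      exact hx (by simp [hcontra]))
    have hwit : ∃ z : V, h z + ε * (G.dist x z : ℝ) < h x := by
      by_contra hc
      push_neg at hc
      have : Nonempty V := ⟨x⟩
      have : h x ≤ u x := le_ciInf fun z => hc z
      linarith
    obtain ⟨z, hz⟩ := hwit
    have hεd : ε * (G.dist x z : ℝ) < h x - h z := by linarith
    rcases main x z with hm | ⟨⟨p, hpW, hpd⟩, hm⟩
    · exfalso
      have : ε * Real.sqrt (G.dist x z) ≤ ε * (G.dist x z : ℝ) :=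
        mul_le_mul_of_nonneg_left (hsqrt_nat _) hε.le
      linarith
    · -- bound the distance
      have hdD : G.dist x z ≤ D₀ := by
        by_contra hdc
        push_neg at hdc
        have h4 : (4 : ℝ) ≤ (G.dist x z : ℝ) := by
          have : 4 ≤ G.dist x z := le_trans (by omega) hdc.le
          exact_mod_cast this
        have hhalf : Real.sqrt (G.dist x z) ≤ (G.dist x z : ℝ) / 2 := by
          calc Real.sqrt (G.dist x z)
              ≤ Real.sqrt (((G.dist x z : ℝ) / 2) ^ 2) := Real.sqrt_le_sqrt (by nlinarith)
            _ = (G.dist x z : ℝ) / 2 := Real.sqrt_sq (by linarith)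
        have hlt : ε * (G.dist x z : ℝ) / 2 < C₀ := by nlinarith
        have hceil : (G.dist x z : ℝ) < 2 * C₀ / ε := by
          rw [lt_div_iff₀ hε]
          nlinarith
        have : (G.dist x z : ℝ) ≤ (⌈2 * C₀ / ε⌉₊ : ℝ) := hceil.le.trans (Nat.le_ceil _)
        have h1 : G.dist x z ≤ ⌈2 * C₀ / ε⌉₊ := by exact_mod_cast this
        omega
      refine Set.mem_biUnion (show p ∈ (W : Set V) from hpW) ?_
      show G.dist p x ≤ D₀
      rw [SimpleGraph.dist_comm]
      exact le_trans hpd hdD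
  have hfin : (⋃ p ∈ (W : Set V), {y : V | G.dist p y ≤ D₀}).Finite :=
    W.finite_toSet.biUnion fun p _ => ball_finite hconn hlf p D₀
  refine ⟨fun x => u x - h x, hfin.subset hAsub, ?_⟩
  intro x y
  have hxy : h x + (u x - h x) = u x := by ring
  have hyy : h y + (u y - h y) = u y := by ring
  rw [hxy, hyy]
  rw [abs_sub_le_iff]
  constructor
  · have := hlip x y
    linarith
  · have := hlip y x
    rw [SimpleGraph.dist_comm (u := y) (v := x)] at this
    linarith
end

section
/- Let α, β, α̃, β̃ ∈ (0,π) with α + β < π and α̃ + β̃ < π, and set γ = π − α − β, γ̃ = π − α̃ − β̃. Suppose a, b ∈ ℂ satisfy a + b = sin γ̃ / sin γ and a·e^{iα} + b·e^{−iα} = (sin β̃ / sin β)·e^{iα̃}. Set g = sin γ̃/sin γ, P = (sin α̃ · sin β̃)/(sin α · sin β), and Q = (cos α̃ · sin β̃)/(sin α · sin β) − (cos α · sin γ̃)/(sin α · sin γ). Then b·(g + P − iQ) = a·(g − P + iQ). -/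
open Real

/-- The Beltrami coefficient formula for the linear map between two Euclidean triangles
with interior angles `α, β, γ` and `α̃, β̃, γ̃`, in denominator-cleared form:
if `L z = a z + b conj z` maps `0, sin γ, sin β e^{iα}` to `0, sin γ̃, sin β̃ e^{iα̃}`,
then `b (g + P − iQ) = a (g − P + iQ)`. -/
theorem beltrami_formula (α β αt βt : ℝ)
    (hα : α ∈ Set.Ioo 0 π) (hβ : β ∈ Set.Ioo 0 π)
    (hαt : αt ∈ Set.Ioo 0 π) (hβt : βt ∈ Set.Ioo 0 π)
    (hsum : α + β < π) (hsumt : αt + βt < π)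
    (γ γt : ℝ) (hγ : γ = π - α - β) (hγt : γt = π - αt - βt)
    (a b : ℂ)
    (hab1 : a + b = ((Real.sin γt / Real.sin γ : ℝ) : ℂ))
    (hab2 : a * Complex.exp ((α : ℂ) * Complex.I)
        + b * Complex.exp (-(α : ℂ) * Complex.I)
      = ((Real.sin βt / Real.sin β : ℝ) : ℂ) * Complex.exp ((αt : ℂ) * Complex.I))
    (g P Q : ℝ)
    (hg : g = Real.sin γt / Real.sin γ)
    (hP : P = Real.sin αt * Real.sin βt / (Real.sin α * Real.sin β))
    (hQ : Q = Real.cos αt * Real.sin βt / (Real.sin α * Real.sin β)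
        - Real.cos α * Real.sin γt / (Real.sin α * Real.sin γ)) :
    b * ((g : ℂ) + (P : ℂ) - Complex.I * (Q : ℂ))
      = a * ((g : ℂ) - (P : ℂ) + Complex.I * (Q : ℂ)) := by
  have hsα : 0 < Real.sin α := Real.sin_pos_of_pos_of_lt_pi hα.1 hα.2
  have hsβ : 0 < Real.sin β := Real.sin_pos_of_pos_of_lt_pi hβ.1 hβ.2
  have hsγ : 0 < Real.sin γ := by
    apply Real.sin_pos_of_pos_of_lt_pi <;> rw [hγ] <;> [linarith; linarith [hα.1, hβ.1]]
  have hsγt : 0 < Real.sin γt := by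
    apply Real.sin_pos_of_pos_of_lt_pi <;> rw [hγt] <;> [linarith; linarith [hαt.1, hβt.1]]
  -- key real identities
  have hq : Real.sin α * Q
      = Real.cos αt * (Real.sin βt / Real.sin β) - Real.cos α * (Real.sin γt / Real.sin γ) := by
    rw [hQ]; field_simp
  have hp : Real.sin α * P = Real.sin αt * (Real.sin βt / Real.sin β) := by
    rw [hP]; field_simp
  -- complex notation
  set c : ℂ := (Real.cos α : ℂ) with hc
  set s : ℂ := (Real.sin α : ℂ) with hs
  set ct : ℂ := (Real.cos αt : ℂ) with hct
  set st : ℂ := (Real.sin αt : ℂ) with hst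
  set gC : ℂ := ((Real.sin γt / Real.sin γ : ℝ) : ℂ) with hgC
  set h : ℂ := ((Real.sin βt / Real.sin β : ℝ) : ℂ) with hh
  have he1 : Complex.exp ((α : ℂ) * Complex.I) = c + s * Complex.I := by
    rw [Complex.exp_mul_I, hc, hs, Complex.ofReal_cos, Complex.ofReal_sin]
  have he2 : Complex.exp (-(α : ℂ) * Complex.I) = c - s * Complex.I := by
    rw [Complex.exp_mul_I, Complex.cos_neg, Complex.sin_neg, hc, hs,
      Complex.ofReal_cos, Complex.ofReal_sin]; ring
  have he3 : Complex.exp ((αt : ℂ) * Complex.I) = ct + st * Complex.I := by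
    rw [Complex.exp_mul_I, hct, hst, Complex.ofReal_cos, Complex.ofReal_sin]
  rw [he1, he2, he3] at hab2
  -- cast real identities to ℂ
  have hqC : s * (Q : ℂ) = ct * h - c * gC := by
    rw [hs, hct, hc, hh, hgC]; exact_mod_cast hq
  have hpC : s * (P : ℂ) = st * h := by
    rw [hs, hst, hh]; exact_mod_cast hp
  have hgg : (g : ℂ) = gC := by rw [hgC, hg]
  have hsne : s ≠ 0 := by
    rw [hs]; exact_mod_cast hsα.ne'
  have h2is : (2 : ℂ) * Complex.I * s ≠ 0 := by
    simp [hsne, Complex.I_ne_zero]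
  -- solve for a and b (times 2·I·s)
  have hb : b * (2 * Complex.I * s) = gC * (c + s * Complex.I) - h * (ct + st * Complex.I) := by
    linear_combination (c + s * Complex.I) * hab1 - hab2
  have ha : a * (2 * Complex.I * s) = h * (ct + st * Complex.I) - gC * (c - s * Complex.I) := by
    linear_combination (-(c - s * Complex.I)) * hab1 + hab2
  apply mul_right_cancel₀ h2is
  rw [hgg]
  linear_combination ((gC : ℂ) + (P : ℂ) - Complex.I * (Q : ℂ)) * hb
    - ((gC : ℂ) - (P : ℂ) + Complex.I * (Q : ℂ)) * ha
    + 2 * gC * hqC + 2 * gC * Complex.I * hpC - 2 * gC * (Q : ℂ) * s * Complex.I_sq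
end

section
/- Let α, β, γ, α̃, β̃, γ̃ ∈ (0,π) with α + β + γ = π and α̃ + β̃ + γ̃ = π. Set g = sin γ̃/sin γ, P = (sin α̃ · sin β̃)/(sin α · sin β), and Q = (cos α̃ · sin β̃)/(sin α · sin β) − (cos α · sin γ̃)/(sin α · sin γ), and let μ = (g − P + iQ)/(g + P − iQ) ∈ ℂ. Then |μ|² = 1 − 4·(sin α̃ · sin β̃ · sin γ̃)/(sin α · sin β · sin γ) / ((g + P)² + Q²). -/
open Real

/- `|g - P + iQ|² = (g - P)² + Q²` and `|g + P - iQ|² = (g + P)² + Q²` differ by `4gP`,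
and `gP` is the ratio of the products of the sines. The denominator is positive because `g, P > 0`. -/

theorem sq_norm_sub_add_I_mul_div_add_sub_I_mul (a b q : ℝ) (h : (a + b) ^ 2 + q ^ 2 ≠ 0) :
    ‖((a : ℂ) - b + Complex.I * q) / ((a : ℂ) + b - Complex.I * q)‖ ^ 2
      = 1 - 4 * (a * b) / ((a + b) ^ 2 + q ^ 2) := by
  have hnum : Complex.normSq ((a : ℂ) - b + Complex.I * q) = (a - b) ^ 2 + q ^ 2 := by
    simpa [mul_comm] using Complex.normSq_add_mul_I (a - b) q
  have hden : Complex.normSq ((a : ℂ) + b - Complex.I * q) = (a + b) ^ 2 + q ^ 2 := by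
    simpa [sub_eq_add_neg, mul_comm] using Complex.normSq_add_mul_I (a + b) (-q)
  rw [norm_div, div_pow, Complex.sq_norm, Complex.sq_norm, hnum, hden]
  field_simp
  ring

theorem beltrami_modulus_sq_general (α β γ αt βt γt : ℝ)
    (hα : α ∈ Set.Ioo 0 π) (hβ : β ∈ Set.Ioo 0 π) (hγ : γ ∈ Set.Ioo 0 π)
    (hαt : αt ∈ Set.Ioo 0 π) (hβt : βt ∈ Set.Ioo 0 π) (hγt : γt ∈ Set.Ioo 0 π)
    (g P Q : ℝ)
    (hg : g = Real.sin γt / Real.sin γ)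
    (hP : P = Real.sin αt * Real.sin βt / (Real.sin α * Real.sin β))
    (μ : ℂ)
    (hμ : μ = ((g : ℂ) - (P : ℂ) + Complex.I * (Q : ℂ)) /
        ((g : ℂ) + (P : ℂ) - Complex.I * (Q : ℂ))) :
    ‖μ‖ ^ 2
      = 1 - 4 * (Real.sin αt * Real.sin βt * Real.sin γt /
            (Real.sin α * Real.sin β * Real.sin γ)) / ((g + P) ^ 2 + Q ^ 2) := by
  have sin_pos {x : ℝ} (hx : x ∈ Set.Ioo 0 π) : 0 < sin x := sin_pos_of_pos_of_lt_pi hx.1 hx.2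
  have hg_pos : 0 < g := hg ▸ div_pos (sin_pos hγt) (sin_pos hγ)
  have hP_pos : 0 < P :=
    hP ▸ div_pos (mul_pos (sin_pos hαt) (sin_pos hβt)) (mul_pos (sin_pos hα) (sin_pos hβ))
  have hgP : sin αt * sin βt * sin γt / (sin α * sin β * sin γ) = g * P := by
    rw [hg, hP]; ring
  rw [hμ, hgP, sq_norm_sub_add_I_mul_div_add_sub_I_mul g P Q (by positivity)]

/-- The modulus identity for the Beltrami coefficient
`μ = (g − P + iQ)/(g + P − iQ)` of the linear map between two Euclidean triangles with
interior angles `α, β, γ` and `α̃, β̃, γ̃`. -/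
theorem beltrami_modulus_sq (α β γ αt βt γt : ℝ)
    (hα : α ∈ Set.Ioo 0 π) (hβ : β ∈ Set.Ioo 0 π) (hγ : γ ∈ Set.Ioo 0 π)
    (hαt : αt ∈ Set.Ioo 0 π) (hβt : βt ∈ Set.Ioo 0 π) (hγt : γt ∈ Set.Ioo 0 π)
    (hsum : α + β + γ = π) (hsumt : αt + βt + γt = π)
    (g P Q : ℝ)
    (hg : g = Real.sin γt / Real.sin γ)
    (hP : P = Real.sin αt * Real.sin βt / (Real.sin α * Real.sin β))
    (hQ : Q = Real.cos αt * Real.sin βt / (Real.sin α * Real.sin β)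
        - Real.cos α * Real.sin γt / (Real.sin α * Real.sin γ))
    (μ : ℂ)
    (hμ : μ = ((g : ℂ) - (P : ℂ) + Complex.I * (Q : ℂ)) /
        ((g : ℂ) + (P : ℂ) - Complex.I * (Q : ℂ))) :
    ‖μ‖ ^ 2
      = 1 - 4 * (Real.sin αt * Real.sin βt * Real.sin γt /
            (Real.sin α * Real.sin β * Real.sin γ)) / ((g + P) ^ 2 + Q ^ 2) :=
  beltrami_modulus_sq_general α β γ αt βt γt hα hβ hγ hαt hβt hγt g P Q hg hP μ hμ
end

section
/- Let η ∈ (0, π/3] and let α, β, γ, α̃, β̃, γ̃ ∈ (η, π − η) with α + β + γ = π and α̃ + β̃ + γ̃ = π. With g = sin γ̃/sin γ, P = (sin α̃ · sin β̃)/(sin α · sin β), Q = (cos α̃ · sin β̃)/(sin α · sin β) − (cos α · sin γ̃)/(sin α · sin γ), and μ = (g − P + iQ)/(g + P − iQ), one has 4·(sin α̃ sin β̃ sin γ̃)/(sin α sin β sin γ)/((g + P)² + Q²) ≥ 4·sin³η / (2·(1/sin²η + 3/sin⁴η)), and consequently |μ|² ≤ 1 − 2·sin⁷η/(sin²η + 3)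 < 1. -/
/-!
For `μ = (g - P + iQ)/(g + P - iQ)` one has `|μ|² = 1 - 4gP/((g + P)² + Q²)`, and `gP` is the
ratio of the sine products of the two triangles. Every sine of an angle in `(η, π - η)` lies in
`[sin η, 1]`, so `gP ≥ sin³η`, while `|g| ≤ 1/sin η` and `|P|, |Q|/2 ≤ 1/sin²η` bound the
denominator by `2(1/sin²η + 3/sin⁴η)`.
-/

open Real

lemma sin_le_sin_of_le_of_le_pi_sub {η x : ℝ} (hη : -(π / 2) ≤ η) (h₁ : η ≤ x)
    (h₂ : x ≤ π - η) : sin η ≤ sin x := by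
  rcases le_total x (π / 2) with h | h
  · exact sin_le_sin_of_le_of_le_pi_div_two hη h h₁
  · rw [← sin_pi_sub x]
    exact sin_le_sin_of_le_of_le_pi_div_two hη (by linarith) (by linarith)

lemma sq_norm_sub_add_mul_I_div (g P Q : ℝ) (h : (g + P) ^ 2 + Q ^ 2 ≠ 0) :
    ‖((g : ℂ) - P + Complex.I * Q) / (g + P - Complex.I * Q)‖ ^ 2
      = 1 - 4 * (g * P) / ((g + P) ^ 2 + Q ^ 2) := by
  obtain ⟨hnum, hden⟩ : Complex.normSq ((g : ℂ) - P + Complex.I * Q) = (g - P) ^ 2 + Q ^ 2 ∧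
      Complex.normSq ((g : ℂ) + P - Complex.I * Q) = (g + P) ^ 2 + Q ^ 2 := by
    constructor <;>
    · simp only [Complex.normSq_apply, Complex.add_re, Complex.sub_re, Complex.add_im,
        Complex.sub_im, Complex.mul_re, Complex.mul_im, Complex.ofReal_re, Complex.ofReal_im,
        Complex.I_re, Complex.I_im]
      ring
  rw [norm_div, div_pow, Complex.sq_norm, Complex.sq_norm, hnum, hden]
  field_simp
  ring

lemma abs_div_le_one_div {x y s : ℝ} (hx : |x| ≤ 1) (hs : 0 < s) (hy : s ≤ y) :
    |x / y| ≤ 1 / s := by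
  rw [abs_div, abs_of_pos (hs.trans_le hy)]
  exact div_le_div₀ zero_le_one hx hs hy

lemma abs_mul_div_mul_le {s u v x y : ℝ} (hs : 0 < s) (hu : |u| ≤ 1) (hv : |v| ≤ 1)
    (hx : s ≤ x) (hy : s ≤ y) : |u * v / (x * y)| ≤ 1 / s ^ 2 := by
  refine abs_div_le_one_div ?_ (pow_pos hs 2) ?_
  · rw [abs_mul]
    exact mul_le_one₀ hu (abs_nonneg v) hv
  · rw [sq]
    exact mul_le_mul hx hy hs.le (hs.le.trans hx)

lemma add_sq_add_sq_le {g P Q a b c : ℝ} (hg : |g| ≤ a) (hP : |P| ≤ b) (hQ : |Q| ≤ c) :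
    (g + P) ^ 2 + Q ^ 2 ≤ 2 * a ^ 2 + 2 * b ^ 2 + c ^ 2 := by
  have hg2 : g ^ 2 ≤ a ^ 2 := sq_le_sq' (abs_le.1 hg).1 (abs_le.1 hg).2
  have hP2 : P ^ 2 ≤ b ^ 2 := sq_le_sq' (abs_le.1 hP).1 (abs_le.1 hP).2
  have hQ2 : Q ^ 2 ≤ c ^ 2 := sq_le_sq' (abs_le.1 hQ).1 (abs_le.1 hQ).2
  nlinarith [sq_nonneg (g - P)]

lemma pow_three_le_mul_mul_div {s a b c x y z : ℝ} (hs : 0 < s) (ha : s ≤ a) (hb : s ≤ b)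
    (hc : s ≤ c) (hx : s ≤ x) (hy : s ≤ y) (hz : s ≤ z) (hx₁ : x ≤ 1) (hy₁ : y ≤ 1)
    (hz₁ : z ≤ 1) : s ^ 3 ≤ a * b * c / (x * y * z) := by
  have hs_abc : s ^ 3 ≤ a * b * c := by
    rw [pow_three']
    exact mul_le_mul (mul_le_mul ha hb hs.le (hs.le.trans ha)) hc hs.le
      (mul_pos (hs.trans_le ha) (hs.trans_le hb)).le
  have hxyz : 0 < x * y * z :=
    mul_pos (mul_pos (hs.trans_le hx) (hs.trans_le hy)) (hs.trans_le hz)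
  have hxyz₁ : x * y * z ≤ 1 :=
    mul_le_one₀ (mul_le_one₀ hx₁ (hs.trans_le hy).le hy₁) (hs.trans_le hz).le hz₁
  exact hs_abc.trans (le_div_self ((pow_pos hs 3).le.trans hs_abc) hxyz hxyz₁)

lemma add_sq_add_sq_pos {g P : ℝ} (Q : ℝ) (hgP : 0 < g * P) : 0 < (g + P) ^ 2 + Q ^ 2 := by
  nlinarith [sq_nonneg (g - P), sq_nonneg Q]

lemma pow_three_div_le_mul_div {s g P Q : ℝ} (hs : 0 < s) (hgP : s ^ 3 ≤ g * P)
    (hg : |g| ≤ 1 / s) (hP : |P| ≤ 1 / s ^ 2) (hQ : |Q| ≤ 2 / s ^ 2) :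
    4 * s ^ 3 / (2 * (1 / s ^ 2 + 3 / s ^ 4)) ≤ 4 * (g * P) / ((g + P) ^ 2 + Q ^ 2) := by
  have hD_le : (g + P) ^ 2 + Q ^ 2 ≤ 2 * (1 / s ^ 2 + 3 / s ^ 4) := by
    convert add_sq_add_sq_le hg hP hQ using 1
    ring
  exact div_le_div₀ (by linarith [pow_pos hs 3]) (by linarith)
    (add_sq_add_sq_pos Q ((pow_pos hs 3).trans_le hgP)) hD_le

lemma four_mul_pow_three_div_eq {s : ℝ} (hs : s ≠ 0) :
    4 * s ^ 3 / (2 * (1 / s ^ 2 + 3 / s ^ 4)) = 2 * s ^ 7 / (s ^ 2 + 3) := by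
  field_simp
  ring

theorem beltrami_uniform_bound_general (η : ℝ) (hη : η ∈ Set.Ioc 0 (π / 3))
    (α β γ αt βt γt : ℝ)
    (hα : α ∈ Set.Ioo η (π - η)) (hβ : β ∈ Set.Ioo η (π - η)) (hγ : γ ∈ Set.Ioo η (π - η))
    (hαt : αt ∈ Set.Ioo η (π - η)) (hβt : βt ∈ Set.Ioo η (π - η))
    (hγt : γt ∈ Set.Ioo η (π - η))
    (g P Q : ℝ)
    (hg : g = Real.sin γt / Real.sin γ)
    (hP : P = Real.sin αt * Real.sin βt / (Real.sin α * Real.sin β))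
    (hQ : Q = Real.cos αt * Real.sin βt / (Real.sin α * Real.sin β)
        - Real.cos α * Real.sin γt / (Real.sin α * Real.sin γ))
    (μ : ℂ)
    (hμ : μ = ((g : ℂ) - (P : ℂ) + Complex.I * (Q : ℂ)) /
        ((g : ℂ) + (P : ℂ) - Complex.I * (Q : ℂ))) :
    4 * (Real.sin αt * Real.sin βt * Real.sin γt /
          (Real.sin α * Real.sin β * Real.sin γ)) / ((g + P) ^ 2 + Q ^ 2)
        ≥ 4 * Real.sin η ^ 3 / (2 * (1 / Real.sin η ^ 2 + 3 / Real.sin η ^ 4)) ∧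
      ‖μ‖ ^ 2 ≤ 1 - 2 * Real.sin η ^ 7 / (Real.sin η ^ 2 + 3) ∧
      1 - 2 * Real.sin η ^ 7 / (Real.sin η ^ 2 + 3) < 1 := by
  obtain ⟨hη0, hη3⟩ := hη
  set s := sin η
  have hs : 0 < s := sin_pos_of_pos_of_lt_pi hη0 (by linarith [pi_pos])
  have hlb : ∀ x ∈ Set.Ioo η (π - η), s ≤ sin x := fun x hx =>
    sin_le_sin_of_le_of_le_pi_sub (by linarith [pi_pos]) hx.1.le hx.2.le
  have hgP : sin αt * sin βt * sin γt / (sin α * sin β * sin γ) = g * P := by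
    rw [hg, hP, mul_div_mul_comm, mul_comm]
  have hg_le : |g| ≤ 1 / s := hg ▸ abs_div_le_one_div (abs_sin_le_one _) hs (hlb γ hγ)
  have hP_le : |P| ≤ 1 / s ^ 2 :=
    hP ▸ abs_mul_div_mul_le hs (abs_sin_le_one _) (abs_sin_le_one _) (hlb α hα) (hlb β hβ)
  have hQ_le : |Q| ≤ 2 / s ^ 2 := by
    have hA := abs_mul_div_mul_le hs (abs_cos_le_one αt) (abs_sin_le_one βt) (hlb α hα) (hlb β hβ)
    have hB := abs_mul_div_mul_le hs (abs_cos_le_one α) (abs_sin_le_one γt) (hlb α hα) (hlb γ hγ)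
    rw [hQ, show (2 : ℝ) / s ^ 2 = 1 / s ^ 2 + 1 / s ^ 2 by ring]
    exact (abs_sub _ _).trans (add_le_add hA hB)
  have hsin_cube : s ^ 3 ≤ g * P := hgP ▸ pow_three_le_mul_mul_div hs (hlb αt hαt)
    (hlb βt hβt) (hlb γt hγt) (hlb α hα) (hlb β hβ) (hlb γ hγ) (sin_le_one α) (sin_le_one β)
    (sin_le_one γ)
  have hbound := pow_three_div_le_mul_div hs hsin_cube hg_le hP_le hQ_le
  have hD := add_sq_add_sq_pos Q ((pow_pos hs 3).trans_le hsin_cube)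
  rw [four_mul_pow_three_div_eq hs.ne'] at hbound ⊢
  rw [hgP, hμ, sq_norm_sub_add_mul_I_div g P Q hD.ne']
  have hgap : 0 < 2 * s ^ 7 / (s ^ 2 + 3) := by positivity
  exact ⟨hbound, by linarith, by linarith⟩

/-- Quantitative quasiconformality: if all six triangle angles lie in `(η, π − η)`, the
Beltrami coefficient `μ` satisfies a uniform bound `|μ|² ≤ 1 − 2 sin⁷η/(sin²η + 3) < 1`. -/
theorem beltrami_uniform_bound (η : ℝ) (hη : η ∈ Set.Ioc 0 (π / 3))
    (α β γ αt βt γt : ℝ)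
    (hα : α ∈ Set.Ioo η (π - η)) (hβ : β ∈ Set.Ioo η (π - η)) (hγ : γ ∈ Set.Ioo η (π - η))
    (hαt : αt ∈ Set.Ioo η (π - η)) (hβt : βt ∈ Set.Ioo η (π - η))
    (hγt : γt ∈ Set.Ioo η (π - η))
    (hsum : α + β + γ = π) (hsumt : αt + βt + γt = π)
    (g P Q : ℝ)
    (hg : g = Real.sin γt / Real.sin γ)
    (hP : P = Real.sin αt * Real.sin βt / (Real.sin α * Real.sin β))
    (hQ : Q = Real.cos αt * Real.sin βt / (Real.sin α * Real.sin β)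
        - Real.cos α * Real.sin γt / (Real.sin α * Real.sin γ))
    (μ : ℂ)
    (hμ : μ = ((g : ℂ) - (P : ℂ) + Complex.I * (Q : ℂ)) /
        ((g : ℂ) + (P : ℂ) - Complex.I * (Q : ℂ))) :
    4 * (Real.sin αt * Real.sin βt * Real.sin γt /
          (Real.sin α * Real.sin β * Real.sin γ)) / ((g + P) ^ 2 + Q ^ 2)
        ≥ 4 * Real.sin η ^ 3 / (2 * (1 / Real.sin η ^ 2 + 3 / Real.sin η ^ 4)) ∧
      ‖μ‖ ^ 2 ≤ 1 - 2 * Real.sin η ^ 7 / (Real.sin η ^ 2 + 3) ∧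
      1 - 2 * Real.sin η ^ 7 / (Real.sin η ^ 2 + 3) < 1 :=
  beltrami_uniform_bound_general η hη α β γ αt βt γt hα hβ hγ hαt hβt hγt g P Q hg hP hQ μ hμ
end

section
/- Let η ∈ (0, π/2) and let a, b ∈ [η, π) with a + b ≤ π. Let x ∈ ℝ be such that a + x/2 ∈ [η, π) and b − x/2 ∈ [η, π). Then |log(sin(a + x/2)) − log(sin(b − x/2)) − log(sin a) + log(sin b)| ≤ |x|/(2·sin²η). -/
/-!
With `g t = log sin (a + t/2) - log sin (b - t/2)` the quantity bounded is `g x - g 0`, and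
`g' t = (cot (a + t/2) + cot (b - t/2)) / 2 = sin (a + b) / (2 sin (a + t/2) sin (b - t/2))`.
On the interval `2 (η - a) ≤ t ≤ 2 (b - η)`, which contains `0` and `x`, both angles lie in
`[η, π - η]` because `a + b ≤ π`, so `|g'| ≤ 1 / (2 sin² η)` and the mean value theorem applies.
-/

open Real Set

namespace Real

theorem sin_le_sin_of_mem_Icc_sub {η θ : ℝ} (hη : 0 ≤ η) (hθ : θ ∈ Icc η (π - η)) :
    sin η ≤ sin θ := by
  obtain ⟨hηθ, hθπ⟩ := hθ
  rcases le_total θ (π / 2) with h | h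
  · exact sin_le_sin_of_le_of_le_pi_div_two (by linarith) h hηθ
  · rw [← sin_pi_sub θ]
    exact sin_le_sin_of_le_of_le_pi_div_two (by linarith) (by linarith) (by linarith)

theorem hasDerivAt_log_sin {u : ℝ} (hu : sin u ≠ 0) :
    HasDerivAt (fun u => log (sin u)) (cot u) u := by
  simpa [cot_eq_cos_div_sin, div_eq_inv_mul] using (hasDerivAt_sin u).log hu

theorem cot_add_cot {u v : ℝ} (hu : sin u ≠ 0) (hv : sin v ≠ 0) :
    cot u + cot v = sin (u + v) / (sin u * sin v) := by
  rw [cot_eq_cos_div_sin, cot_eq_cos_div_sin, sin_add]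
  field_simp
  ring

theorem abs_cot_add_cot_le {η u v : ℝ} (hη : 0 < η) (hu : u ∈ Icc η (π - η))
    (hv : v ∈ Icc η (π - η)) : |cot u + cot v| ≤ 1 / sin η ^ 2 := by
  have hsη : 0 < sin η := sin_pos_of_pos_of_lt_pi hη (by linarith [hu.1, hu.2])
  have hsu := sin_le_sin_of_mem_Icc_sub hη.le hu
  have hsv := sin_le_sin_of_mem_Icc_sub hη.le hv
  have hprod : sin η ^ 2 ≤ sin u * sin v := by nlinarith
  rw [cot_add_cot (by linarith) (by linarith), abs_div,
    abs_of_pos (by nlinarith : 0 < sin u * sin v)]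
  exact div_le_div₀ zero_le_one (abs_sin_le_one _) (by positivity) hprod

end Real

/-- The logarithmic length-ratio `log (sin α / sin β)` of a kite with angles `α = a + t/2` and
`β = b - t/2`, after the central angles are deformed by `t`. -/
noncomputable def kiteLogRatio (a b t : ℝ) : ℝ := log (sin (a + t / 2)) - log (sin (b - t / 2))

section KiteLogRatio

variable {η a b : ℝ}

theorem hasDerivAt_kiteLogRatio {t : ℝ} (ha : sin (a + t / 2) ≠ 0) (hb : sin (b - t / 2) ≠ 0) :
    HasDerivAt (kiteLogRatio a b) ((cot (a + t / 2) + cot (b - t / 2)) / 2) t := by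
  have hu : HasDerivAt (fun t : ℝ => a + t / 2) (1 / 2) t := by
    simpa using ((hasDerivAt_id t).div_const 2).const_add a
  have hv : HasDerivAt (fun t : ℝ => b - t / 2) (-(1 / 2)) t := by
    simpa using ((hasDerivAt_id t).div_const 2).const_sub b
  exact (((hasDerivAt_log_sin ha).comp t hu).sub ((hasDerivAt_log_sin hb).comp t hv)).congr_deriv
    (by ring : _ = (cot (a + t / 2) + cot (b - t / 2)) / 2)

theorem add_half_mem_Icc_and_sub_half_mem_Icc (hab : a + b ≤ π) {t : ℝ}
    (ht : t ∈ Icc (2 * (η - a)) (2 * (b - η))) :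
    a + t / 2 ∈ Icc η (π - η) ∧ b - t / 2 ∈ Icc η (π - η) := by
  obtain ⟨hlo, hhi⟩ := ht
  exact ⟨⟨by linarith, by linarith⟩, ⟨by linarith, by linarith⟩⟩

theorem abs_kiteLogRatio_sub_le (hη : 0 < η) (hab : a + b ≤ π) {s t : ℝ}
    (hs : s ∈ Icc (2 * (η - a)) (2 * (b - η))) (ht : t ∈ Icc (2 * (η - a)) (2 * (b - η))) :
    |kiteLogRatio a b t - kiteLogRatio a b s| ≤ |t - s| / (2 * sin η ^ 2) := by
  have hsin_ne {θ : ℝ} (hθ : θ ∈ Icc η (π - η)) : sin θ ≠ 0 :=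
    (sin_pos_of_pos_of_lt_pi (by linarith [hθ.1]) (by linarith [hθ.2])).ne'
  have hderiv : ∀ r ∈ Icc (2 * (η - a)) (2 * (b - η)), HasDerivWithinAt (kiteLogRatio a b)
      ((cot (a + r / 2) + cot (b - r / 2)) / 2) (Icc (2 * (η - a)) (2 * (b - η))) r :=
    fun r hr => (hasDerivAt_kiteLogRatio (hsin_ne (add_half_mem_Icc_and_sub_half_mem_Icc hab hr).1)
      (hsin_ne (add_half_mem_Icc_and_sub_half_mem_Icc hab hr).2)).hasDerivWithinAt
  have hbound : ∀ r ∈ Icc (2 * (η - a)) (2 * (b - η)),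
      ‖(cot (a + r / 2) + cot (b - r / 2)) / 2‖ ≤ 1 / (2 * sin η ^ 2) := by
    intro r hr
    rw [norm_div, Real.norm_eq_abs, Real.norm_two, mul_comm, ← div_div]
    gcongr
    exact abs_cot_add_cot_le hη (add_half_mem_Icc_and_sub_half_mem_Icc hab hr).1
      (add_half_mem_Icc_and_sub_half_mem_Icc hab hr).2
  calc |kiteLogRatio a b t - kiteLogRatio a b s|
      ≤ 1 / (2 * sin η ^ 2) * |t - s| :=
        (convex_Icc _ _).norm_image_sub_le_of_norm_hasDerivWithin_le hderiv hbound hs ht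
    _ = |t - s| / (2 * sin η ^ 2) := by ring

end KiteLogRatio

/-- Lipschitz bound for the change of the logarithmic length-ratio of a kite under a
deformation `x` of the central angles. -/
theorem log_ratio_change_bound (η : ℝ) (hη : η ∈ Set.Ioo 0 (π / 2)) (a b : ℝ)
    (ha : a ∈ Set.Ico η π) (hb : b ∈ Set.Ico η π) (hab : a + b ≤ π)
    (x : ℝ) (h1 : a + x / 2 ∈ Set.Ico η π) (h2 : b - x / 2 ∈ Set.Ico η π) :
    |Real.log (Real.sin (a + x / 2)) - Real.log (Real.sin (b - x / 2))
        - Real.log (Real.sin a) + Real.log (Real.sin b)|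
      ≤ |x| / (2 * Real.sin η ^ 2) := by
  have hbound := abs_kiteLogRatio_sub_le hη.1 hab
    (show (0 : ℝ) ∈ Icc (2 * (η - a)) (2 * (b - η)) from ⟨by linarith [ha.1], by linarith [hb.1]⟩)
    (show x ∈ Icc (2 * (η - a)) (2 * (b - η)) from ⟨by linarith [h1.1], by linarith [h2.1]⟩)
  simp only [kiteLogRatio, zero_div, add_zero, sub_zero] at hbound
  calc _ = |log (sin (a + x / 2)) - log (sin (b - x / 2)) - (log (sin a) - log (sin b))| := by
          ring_nf
    _ ≤ |x| / (2 * sin η ^ 2) := hbound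
end
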